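/- arXiv:1706.10166 — 2 statements merged into one kernel-verified Lean document; each statement's English description precedes it below -/
import Mathlib

section
/- Let (X,d) be a metric space with at least two points, and define for each pair of distinct points x,y ∈ X and each α ∈ X \ {x,y} the semi-metrics d_{(y,α,x)} and d_{(x,α,y)} by the formula d_{(ω,α,β)}(u,v) = (d(u,v)/(d(u,ω)d(ω,v)))·(d(α,ω)d(ω,β)/d(α,β)). Then d_{(y,α,x)}(x,z)·d_{(x,α,y)}(y,z) = 1 for all z ∈ X \ {x,y}, and consequently the balls B_{(y,α,x),1}(x) and B_{(x,α,y),1}(y) are disjoint; hence the Möbius topology is Hausdorff. -/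
/-!
For `z ∉ {x, y}` the two semi-metrics are built from the same six distances, each appearing once
in a numerator and once in a denominator, so their product at `z` is `1`. A common point of the
two unit balls would make that product `< 1`; and neither ball contains the other's centre, since
a base point `ω` is at `d_{(ω,α,β)}`-distance `∞` from every other point.
-/

open ENNReal

noncomputable section

/-- The semi-metric `d_A` associated to a triple `A = (ω,α,β)` in a metric
space, valued in `ℝ≥0∞` with the convention `a/0 = ∞` for `a > 0`. -/
def dTriple {X : Type*} [MetricSpace X] (ω α β x y : X) : ℝ≥0∞ :=
  (ENNReal.ofReal (dist x y) / (ENNReal.ofReal (dist x ω) * ENNReal.ofReal (dist ω y))) *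
    (ENNReal.ofReal (dist α ω) * ENNReal.ofReal (dist ω β) / ENNReal.ofReal (dist α β))

section dTriple

variable {X : Type*} [MetricSpace X]

lemma dTriple_comm (ω α β x y : X) : dTriple ω α β x y = dTriple ω α β y x := by
  unfold dTriple
  rw [dist_comm x y, dist_comm x ω, dist_comm ω y, mul_comm (ENNReal.ofReal (dist ω x))]

lemma dTriple_eq_ofReal {ω α β x y : X} (hxω : x ≠ ω) (hωy : ω ≠ y) (hαβ : α ≠ β) :
    dTriple ω α β x y =
      ENNReal.ofReal (dist x y / (dist x ω * dist ω y) * (dist α ω * dist ω β / dist α β)) := by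
  have hxω' : 0 < dist x ω := dist_pos.2 hxω
  have hωy' : 0 < dist ω y := dist_pos.2 hωy
  unfold dTriple
  rw [← ENNReal.ofReal_mul hxω'.le, ← ENNReal.ofReal_mul dist_nonneg,
    ← ENNReal.ofReal_div_of_pos (mul_pos hxω' hωy'), ← ENNReal.ofReal_div_of_pos (dist_pos.2 hαβ),
    ← ENNReal.ofReal_mul (by positivity)]

lemma dTriple_base_left {ω α β y : X} (hωy : ω ≠ y) (hαω : α ≠ ω) (hωβ : ω ≠ β) :
    dTriple ω α β ω y = ⊤ := by
  have hωy' : ENNReal.ofReal (dist ω y) ≠ 0 := by simpa using dist_pos.2 hωy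
  have hscale : ENNReal.ofReal (dist α ω) * ENNReal.ofReal (dist ω β) /
      ENNReal.ofReal (dist α β) ≠ 0 :=
    ENNReal.div_ne_zero.2 ⟨by simp [hαω, hωβ], ENNReal.ofReal_ne_top⟩
  unfold dTriple
  rw [dist_self, ENNReal.ofReal_zero, zero_mul, ENNReal.div_zero hωy', ENNReal.top_mul hscale]

lemma dTriple_mul_dTriple_swap {x y α z : X} (hxy : x ≠ y) (hαx : α ≠ x) (hαy : α ≠ y)
    (hzx : z ≠ x) (hzy : z ≠ y) :
    dTriple y α x x z * dTriple x α y y z = 1 := by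
  have hxz : 0 < dist x z := dist_pos.2 hzx.symm
  have hyz : 0 < dist y z := dist_pos.2 hzy.symm
  have hxy' : 0 < dist x y := dist_pos.2 hxy
  have hαx' : 0 < dist α x := dist_pos.2 hαx
  have hαy' : 0 < dist α y := dist_pos.2 hαy
  rw [dTriple_eq_ofReal hxy hzy.symm hαx, dTriple_eq_ofReal hxy.symm hzx.symm hαy,
    ← ENNReal.ofReal_mul (by positivity), ← ENNReal.ofReal_one, dist_comm y x]
  congr 1
  field_simp

end dTriple

/-- For distinct points x, y and α ∉ {x,y}, the identity
d_{(y,α,x)}(x,z)·d_{(x,α,y)}(y,z) = 1 holds for all z ∉ {x,y}, and consequently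
the unit balls B_{(y,α,x),1}(x) and B_{(x,α,y),1}(y) are disjoint (Hausdorff
separation in the Möbius topology). -/
theorem mobius_hausdorff_separation {X : Type*} [MetricSpace X]
    (x y α : X) (hxy : x ≠ y) (hαx : α ≠ x) (hαy : α ≠ y) :
    (∀ z : X, z ≠ x → z ≠ y →
      dTriple y α x x z * dTriple x α y y z = 1) ∧
    Disjoint {u : X | dTriple y α x u x < 1} {u : X | dTriple x α y u y < 1} := by
  refine ⟨fun z hzx hzy => dTriple_mul_dTriple_swap hxy hαx hαy hzx hzy, ?_⟩
  refine Set.disjoint_left.2 fun u (hux : dTriple y α x u x < 1) (huy : dTriple x α y u y < 1) => ?_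
  rcases eq_or_ne u x with rfl | hux'
  · simp [dTriple_base_left hxy hαx hxy] at huy
  rcases eq_or_ne u y with rfl | huy'
  · simp [dTriple_base_left hxy.symm hαy hxy.symm] at hux
  rw [dTriple_comm] at hux huy
  exact (mul_lt_one_of_lt_of_le hux huy.le).ne (dTriple_mul_dTriple_swap hxy hαx hαy hux' huy')

end
end

section
/- Let (X,d) be a metric space, (x_n) a Cauchy sequence in X, and y, z ∈ X a good pair, i.e., y ≠ z and neither d(x_n,y) → 0 nor d(x_n,z) → 0. Then (d(x_n,y)·d(x_m,z))/(d(x_n,z)·d(x_m,y)) → 1 as n,m → ∞. -/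
open Filter Topology

/-! Along a Cauchy sequence the distances to a fixed point form a Cauchy sequence of reals
(`dist · y` is 1-Lipschitz), hence converge; for a good pair both limits `a`, `b` are nonzero,
so the ratio tends to `a * b / (b * a) = 1`. -/

theorem CauchySeq.exists_tendsto_dist {X β : Type*} [PseudoMetricSpace X] [Preorder β]
    {x : β → X} (hx : CauchySeq x) (y : X) :
    ∃ a, Tendsto (fun n => dist (x n) y) atTop (𝓝 a) :=
  cauchySeq_tendsto_of_complete
    ((uniformContinuous_id.dist uniformContinuous_const).comp_cauchySeq hx)

theorem Filter.Tendsto.mul_div_mul_swap_prod {α 𝕜 : Type*} [Field 𝕜] [TopologicalSpace 𝕜]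
    [ContinuousMul 𝕜] [ContinuousInv₀ 𝕜] {l : Filter α} {u v : α → 𝕜} {a b : 𝕜}
    (hu : Tendsto u l (𝓝 a)) (hv : Tendsto v l (𝓝 b)) (ha : a ≠ 0) (hb : b ≠ 0) :
    Tendsto (fun p : α × α => u p.1 * v p.2 / (v p.1 * u p.2)) (l ×ˢ l) (𝓝 1) := by
  have h := ((hu.comp tendsto_fst).mul (hv.comp tendsto_snd)).div
    ((hv.comp tendsto_fst).mul (hu.comp tendsto_snd)) (mul_ne_zero hb ha)
  rwa [mul_comm b a, div_self (mul_ne_zero ha hb)] at h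

theorem cauchy_crt_middle_component_tendsto_one_general {X : Type*} [MetricSpace X]
    (x : ℕ → X) (hx : CauchySeq x) (y z : X)
    (hy : ¬ Tendsto (fun n => dist (x n) y) atTop (nhds 0))
    (hz : ¬ Tendsto (fun n => dist (x n) z) atTop (nhds 0)) :
    Tendsto
      (fun p : ℕ × ℕ =>
        dist (x p.1) y * dist (x p.2) z / (dist (x p.1) z * dist (x p.2) y))
      (atTop ×ˢ atTop) (nhds 1) := by
  obtain ⟨a, ha⟩ := hx.exists_tendsto_dist y
  obtain ⟨b, hb⟩ := hx.exists_tendsto_dist z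
  exact ha.mul_div_mul_swap_prod hb (fun h => hy (h ▸ ha)) (fun h => hz (h ▸ hb))

/-- For a Cauchy sequence in a metric space and a good pair (y,z),
the middle-component ratio of the cross-ratio triple tends to 1. -/
theorem cauchy_crt_middle_component_tendsto_one {X : Type*} [MetricSpace X]
    (x : ℕ → X) (hx : CauchySeq x) (y z : X) (hyz : y ≠ z)
    (hy : ¬ Tendsto (fun n => dist (x n) y) atTop (nhds 0))
    (hz : ¬ Tendsto (fun n => dist (x n) z) atTop (nhds 0)) :
    Tendsto
      (fun p : ℕ × ℕ =>
        dist (x p.1) y * dist (x p.2) z / (dist (x p.1) z * dist (x p.2) y))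
      (atTop ×ˢ atTop) (nhds 1) :=
  cauchy_crt_middle_component_tendsto_one_general x hx y z hy hz
end
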